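/- arXiv:1910.10537 — 2 statements merged into one kernel-verified Lean document; each statement's English description precedes it below -/
import Mathlib

section
/- Let S, A be finite sets and suppose both MDPs share the same transition kernel T(s|a,s') and reward r with |r(s,a)| ≤ r_max, discount 0 ≤ γ < 1, and the same initial state distribution p_0. Let π₁, π₂ be two policies satisfying sup_s D_TV(π₁(·|s), π₂(·|s)) ≤ K·d for constants K, d ≥ 0. Let p_t^i(s,a) denote the probability of being in state s and taking action a at time t when following π_i from p_0, and let η_i = ∑_t γ^t ∑_{s,a} p_t^i(s,a) r(s,a). Then |η₁ - η₂| ≤ 2 r_max ∑_{t=0}^∞ γ^t min(1, (t+1)·K·d) ≤ 2 r_max K d / (1-γ)². -/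
/-!
Let δ_t be the L¹ distance between the two state distributions at time t, and Δ_t the one between
the state-action distributions. Switching the policy in a state costs at most twice its TV distance,
weighted by the state's probability, so Δ_t ≤ δ_t + 2Kd; a stochastic transition kernel does not
increase L¹ distance, so δ_{t+1} ≤ Δ_t. With δ_0 = 0 this gives Δ_t ≤ min(2, 2(t+1)Kd), hence the
expected rewards at time t differ by at most 2 r_max min(1, (t+1)Kd). Summing with discount and
using ∑ (t+1) γ^t = (1-γ)⁻² gives both bounds.
-/

open Finset

section StochasticMatrix

variable {ι κ : Type*} [Fintype ι] [Fintype κ]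

theorem sum_abs_sub_le_two {p q : ι → ℝ} (hp : p ∈ stdSimplex ℝ ι) (hq : q ∈ stdSimplex ℝ ι) :
    ∑ i, |p i - q i| ≤ 2 :=
  calc ∑ i, |p i - q i| ≤ ∑ i, (p i + q i) :=
        sum_le_sum fun i _ => (abs_sub _ _).trans_eq <| by
          rw [abs_of_nonneg (hp.1 i), abs_of_nonneg (hq.1 i)]
    _ = 2 := by rw [sum_add_distrib, hp.2, hq.2]; norm_num

theorem abs_sum_mul_le {x r : ι → ℝ} {M : ℝ} (hr : ∀ i, |r i| ≤ M) :
    |∑ i, x i * r i| ≤ (∑ i, |x i|) * M :=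
  calc |∑ i, x i * r i| ≤ ∑ i, |x i| * M :=
        (abs_sum_le_sum_abs _ _).trans <| sum_le_sum fun i _ => by
          rw [abs_mul]; exact mul_le_mul_of_nonneg_left (hr i) (abs_nonneg _)
    _ = (∑ i, |x i|) * M := (sum_mul _ _ _).symm

variable {P : κ → ι → ℝ}

theorem sum_mul_mem_stdSimplex (hP0 : ∀ k i, 0 ≤ P k i) (hP1 : ∀ i, ∑ k, P k i = 1)
    {x : ι → ℝ} (hx : x ∈ stdSimplex ℝ ι) : (fun k => ∑ i, P k i * x i) ∈ stdSimplex ℝ κ := by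
  refine ⟨fun k => sum_nonneg fun i _ => mul_nonneg (hP0 k i) (hx.1 i), ?_⟩
  rw [sum_comm]
  simp only [← sum_mul, hP1, one_mul, hx.2]

theorem sum_abs_sum_mul_le (hP0 : ∀ k i, 0 ≤ P k i) (hP1 : ∀ i, ∑ k, P k i = 1) (x : ι → ℝ) :
    ∑ k, |∑ i, P k i * x i| ≤ ∑ i, |x i| :=
  calc ∑ k, |∑ i, P k i * x i| ≤ ∑ k, ∑ i, P k i * |x i| :=
        sum_le_sum fun k _ => (abs_sum_le_sum_abs _ _).trans_eq <|
          sum_congr rfl fun i _ => by rw [abs_mul, abs_of_nonneg (hP0 k i)]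
    _ = ∑ i, |x i| := by
        rw [sum_comm]
        simp only [← sum_mul, hP1, one_mul]

end StochasticMatrix

section Policy

variable {S A : Type*} [Fintype S] [Fintype A]

def stateActionDist (π : A → S → ℝ) (p : S → ℝ) : S × A → ℝ := fun x => π x.2 x.1 * p x.1

theorem sum_stateActionDist_mul (π : A → S → ℝ) (p : S → ℝ) (f : S → A → ℝ) :
    ∑ x, stateActionDist π p x * f x.1 x.2 = ∑ s, ∑ a, π a s * p s * f s a :=
  Fintype.sum_prod_type _

theorem stateActionDist_mem_stdSimplex {π : A → S → ℝ} (hπ0 : ∀ a s, 0 ≤ π a s)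
    (hπ1 : ∀ s, ∑ a, π a s = 1) {p : S → ℝ} (hp : p ∈ stdSimplex ℝ S) :
    stateActionDist π p ∈ stdSimplex ℝ (S × A) := by
  refine ⟨fun x => mul_nonneg (hπ0 _ _) (hp.1 _), ?_⟩
  rw [Fintype.sum_prod_type]
  simp only [stateActionDist, ← sum_mul, hπ1, one_mul, hp.2]

theorem sum_abs_sub_stateActionDist_le {π₁ π₂ : A → S → ℝ} {c : ℝ}
    (hπ₁0 : ∀ a s, 0 ≤ π₁ a s) (hπ₁1 : ∀ s, ∑ a, π₁ a s = 1)
    (hTV : ∀ s, (∑ a, |π₁ a s - π₂ a s|) / 2 ≤ c)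
    (p₁ : S → ℝ) {p₂ : S → ℝ} (hp₂ : p₂ ∈ stdSimplex ℝ S) :
    ∑ x, |stateActionDist π₁ p₁ x - stateActionDist π₂ p₂ x| ≤ ∑ s, |p₁ s - p₂ s| + 2 * c := by
  have hs : ∀ s, ∑ a, |π₁ a s * p₁ s - π₂ a s * p₂ s| ≤ |p₁ s - p₂ s| + p₂ s * (2 * c) := by
    intro s
    calc ∑ a, |π₁ a s * p₁ s - π₂ a s * p₂ s|
        ≤ ∑ a, (π₁ a s * |p₁ s - p₂ s| + |π₁ a s - π₂ a s| * p₂ s) := by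
          refine sum_le_sum fun a _ => ?_
          rw [show π₁ a s * p₁ s - π₂ a s * p₂ s =
              π₁ a s * (p₁ s - p₂ s) + (π₁ a s - π₂ a s) * p₂ s by ring]
          refine (abs_add_le _ _).trans_eq ?_
          rw [abs_mul, abs_mul, abs_of_nonneg (hπ₁0 a s), abs_of_nonneg (hp₂.1 s)]
      _ ≤ |p₁ s - p₂ s| + p₂ s * (2 * c) := by
          rw [sum_add_distrib, ← sum_mul, ← sum_mul, hπ₁1, one_mul, mul_comm]
          gcongr
          · exact hp₂.1 s
          · linarith [hTV s]
  calc ∑ x, |stateActionDist π₁ p₁ x - stateActionDist π₂ p₂ x|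
      ≤ ∑ s, (|p₁ s - p₂ s| + p₂ s * (2 * c)) := by
        rw [Fintype.sum_prod_type]; exact sum_le_sum fun s _ => hs s
    _ = ∑ s, |p₁ s - p₂ s| + 2 * c := by rw [sum_add_distrib, ← sum_mul, hp₂.2, one_mul]

theorem abs_sum_policy_reward_le {π : A → S → ℝ} (hπ0 : ∀ a s, 0 ≤ π a s)
    (hπ1 : ∀ s, ∑ a, π a s = 1) {p : S → ℝ} (hp : p ∈ stdSimplex ℝ S) {r : S → A → ℝ} {M : ℝ}
    (hr : ∀ s a, |r s a| ≤ M) : |∑ s, ∑ a, π a s * p s * r s a| ≤ M := by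
  have hμ := stateActionDist_mem_stdSimplex hπ0 hπ1 hp
  rw [← sum_stateActionDist_mul]
  refine (abs_sum_mul_le fun x : S × A => hr x.1 x.2).trans_eq ?_
  simp only [abs_of_nonneg (hμ.1 _), hμ.2, one_mul]

theorem abs_sum_policy_reward_sub_le (π₁ π₂ : A → S → ℝ) (p₁ p₂ : S → ℝ) {r : S → A → ℝ} {M : ℝ}
    (hr : ∀ s a, |r s a| ≤ M) :
    |∑ s, ∑ a, π₁ a s * p₁ s * r s a - ∑ s, ∑ a, π₂ a s * p₂ s * r s a| ≤
      (∑ x, |stateActionDist π₁ p₁ x - stateActionDist π₂ p₂ x|) * M := by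
  rw [← sum_stateActionDist_mul, ← sum_stateActionDist_mul, ← sum_sub_distrib]
  simp only [← sub_mul]
  exact abs_sum_mul_le fun x : S × A => hr x.1 x.2

end Policy

section Occupancy

variable {S A : Type*} [Fintype S] [Fintype A] {T : S → A → S → ℝ}

theorem occupancy_succ {π : A → S → ℝ} {p : ℕ → S → ℝ}
    (hrec : ∀ t s, p (t + 1) s = ∑ s', ∑ a', T s a' s' * π a' s' * p t s') (t : ℕ) :
    p (t + 1) = fun s => ∑ x, T s x.2 x.1 * stateActionDist π (p t) x := by
  ext s
  rw [hrec, Fintype.sum_prod_type]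
  simp only [stateActionDist, mul_assoc]

variable (hT0 : ∀ s a s', 0 ≤ T s a s') (hT1 : ∀ a s', ∑ s, T s a s' = 1)
include hT0 hT1

theorem occupancy_mem_stdSimplex {π : A → S → ℝ} (hπ0 : ∀ a s, 0 ≤ π a s)
    (hπ1 : ∀ s, ∑ a, π a s = 1) {p : ℕ → S → ℝ} (h0 : p 0 ∈ stdSimplex ℝ S)
    (hrec : ∀ t s, p (t + 1) s = ∑ s', ∑ a', T s a' s' * π a' s' * p t s') (t : ℕ) :
    p t ∈ stdSimplex ℝ S := by
  induction t with
  | zero => exact h0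
  | succ t ih =>
    rw [occupancy_succ hrec]
    exact sum_mul_mem_stdSimplex (fun s x => hT0 s x.2 x.1) (fun x => hT1 x.2 x.1)
      (stateActionDist_mem_stdSimplex hπ0 hπ1 ih)

variable {π₁ π₂ : A → S → ℝ} {p₁ p₂ : ℕ → S → ℝ} {c : ℝ}
  (hπ₁0 : ∀ a s, 0 ≤ π₁ a s) (hπ₁1 : ∀ s, ∑ a, π₁ a s = 1)
  (hTV : ∀ s, (∑ a, |π₁ a s - π₂ a s|) / 2 ≤ c) (hp₂ : ∀ t, p₂ t ∈ stdSimplex ℝ S)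
  (hrec₁ : ∀ t s, p₁ (t + 1) s = ∑ s', ∑ a', T s a' s' * π₁ a' s' * p₁ t s')
  (hrec₂ : ∀ t s, p₂ (t + 1) s = ∑ s', ∑ a', T s a' s' * π₂ a' s' * p₂ t s')
include hπ₁0 hπ₁1 hTV hp₂ hrec₁ hrec₂

theorem sum_abs_sub_occupancy_le (h0 : p₁ 0 = p₂ 0) (t : ℕ) :
    ∑ s, |p₁ t s - p₂ t s| ≤ 2 * t * c := by
  induction t with
  | zero => simp [h0]
  | succ t ih =>
    have hstep := sum_abs_sub_stateActionDist_le hπ₁0 hπ₁1 hTV (p₁ t) (hp₂ t)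
    calc ∑ s, |p₁ (t + 1) s - p₂ (t + 1) s|
        = ∑ s, |∑ x, T s x.2 x.1 *
            (stateActionDist π₁ (p₁ t) x - stateActionDist π₂ (p₂ t) x)| := by
          refine sum_congr rfl fun s _ => ?_
          rw [occupancy_succ hrec₁, occupancy_succ hrec₂, ← sum_sub_distrib]
          simp only [mul_sub]
      _ ≤ ∑ x, |stateActionDist π₁ (p₁ t) x - stateActionDist π₂ (p₂ t) x| :=
          sum_abs_sum_mul_le (fun s x => hT0 s x.2 x.1) (fun x => hT1 x.2 x.1)
            (stateActionDist π₁ (p₁ t) - stateActionDist π₂ (p₂ t))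
      _ ≤ 2 * ↑(t + 1) * c := by push_cast; linarith

theorem sum_abs_sub_stateActionDist_occupancy_le (hπ₂0 : ∀ a s, 0 ≤ π₂ a s)
    (hπ₂1 : ∀ s, ∑ a, π₂ a s = 1) (hp₁ : ∀ t, p₁ t ∈ stdSimplex ℝ S) (h0 : p₁ 0 = p₂ 0)
    (t : ℕ) :
    ∑ x, |stateActionDist π₁ (p₁ t) x - stateActionDist π₂ (p₂ t) x| ≤
      2 * min 1 ((t + 1) * c) := by
  rw [mul_min_of_nonneg _ _ zero_le_two, mul_one]
  refine le_min (sum_abs_sub_le_two (stateActionDist_mem_stdSimplex hπ₁0 hπ₁1 (hp₁ t))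
    (stateActionDist_mem_stdSimplex hπ₂0 hπ₂1 (hp₂ t))) ?_
  have hstate := sum_abs_sub_occupancy_le hT0 hT1 hπ₁0 hπ₁1 hTV hp₂ hrec₁ hrec₂ h0 t
  have hstep := sum_abs_sub_stateActionDist_le hπ₁0 hπ₁1 hTV (p₁ t) (hp₂ t)
  linarith

end Occupancy

theorem abs_min_one_le_one {x : ℝ} (hx : 0 ≤ x) : |min 1 x| ≤ 1 := by
  rw [abs_of_nonneg (le_min zero_le_one hx)]
  exact min_le_left _ _

section Discounting

variable {γ : ℝ} (hγ0 : 0 ≤ γ) (hγ1 : γ < 1)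
include hγ0 hγ1

theorem summable_geometric_mul_of_abs_le {f : ℕ → ℝ} {M : ℝ} (hf : ∀ t, |f t| ≤ M) :
    Summable fun t => γ ^ t * f t := by
  refine .of_norm_bounded ((summable_geometric_of_lt_one hγ0 hγ1).mul_right M) fun t => ?_
  rw [Real.norm_eq_abs, abs_mul, abs_of_nonneg (pow_nonneg hγ0 t)]
  exact mul_le_mul_of_nonneg_left (hf t) (pow_nonneg hγ0 t)

theorem abs_tsum_geometric_mul_sub_le {f g h : ℕ → ℝ} {M N C : ℝ} (hf : ∀ t, |f t| ≤ M)
    (hg : ∀ t, |g t| ≤ M) (hh : ∀ t, |h t| ≤ N) (hfg : ∀ t, |f t - g t| ≤ C * h t) :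
    |∑' t, γ ^ t * f t - ∑' t, γ ^ t * g t| ≤ C * ∑' t, γ ^ t * h t := by
  rw [← (summable_geometric_mul_of_abs_le hγ0 hγ1 hf).tsum_sub
    (summable_geometric_mul_of_abs_le hγ0 hγ1 hg), ← Real.norm_eq_abs]
  refine tsum_of_norm_bounded
    ((summable_geometric_mul_of_abs_le hγ0 hγ1 hh).hasSum.mul_left C) fun t => ?_
  rw [Real.norm_eq_abs, ← mul_sub, abs_mul, abs_of_nonneg (pow_nonneg hγ0 t), mul_left_comm]
  exact mul_le_mul_of_nonneg_left (hfg t) (pow_nonneg hγ0 t)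

theorem tsum_geometric_mul_min_le {c : ℝ} (hc : 0 ≤ c) :
    ∑' t : ℕ, γ ^ t * min 1 ((t + 1) * c) ≤ c / (1 - γ) ^ 2 := by
  have hnorm : ‖γ‖ < 1 := by rwa [Real.norm_eq_abs, abs_of_nonneg hγ0]
  have hsucc : HasSum (fun t : ℕ => ((t : ℝ) + 1) * γ ^ t * c) (c / (1 - γ) ^ 2) := by
    rw [← one_div_mul_eq_div]
    exact HasSum.mul_right c (by simpa using hasSum_choose_mul_geometric_of_norm_lt_one 1 hnorm)
  refine hasSum_le (fun t => ?_) (summable_geometric_mul_of_abs_le hγ0 hγ1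
    fun t => abs_min_one_le_one (by positivity : (0 : ℝ) ≤ (t + 1) * c)).hasSum hsucc
  calc γ ^ t * min 1 ((t + 1) * c) ≤ γ ^ t * ((t + 1) * c) := by gcongr; exact min_le_right _ _
    _ = (t + 1) * γ ^ t * c := by ring

end Discounting

/-- Proposition 1: if two policies are uniformly K·d close in TV distance,
the expected discounted returns differ by at most
2 r_max ∑ γ^t min(1,(t+1)Kd) ≤ 2 r_max K d/(1-γ)². -/
theorem prop1_return_bound
    {S A : Type*} [Fintype S] [Fintype A]
    (T : S → A → S → ℝ)
    (hT0 : ∀ s a s', 0 ≤ T s a s') (hT1 : ∀ a s', ∑ s, T s a s' = 1)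
    (r : S → A → ℝ) (rmax : ℝ) (hr : ∀ s a, |r s a| ≤ rmax)
    (γ : ℝ) (hγ0 : 0 ≤ γ) (hγ1 : γ < 1)
    (p0 : S → ℝ) (hp00 : ∀ s, 0 ≤ p0 s) (hp01 : ∑ s, p0 s = 1)
    (π₁ π₂ : A → S → ℝ)
    (hπ₁0 : ∀ a s, 0 ≤ π₁ a s) (hπ₁1 : ∀ s, ∑ a, π₁ a s = 1)
    (hπ₂0 : ∀ a s, 0 ≤ π₂ a s) (hπ₂1 : ∀ s, ∑ a, π₂ a s = 1)
    (K d : ℝ) (hK : 0 ≤ K) (hd : 0 ≤ d)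
    (hTV : ∀ s, (∑ a, |π₁ a s - π₂ a s|) / 2 ≤ K * d)
    (p₁ p₂ : ℕ → S → ℝ)
    (hp₁init : p₁ 0 = p0) (hp₂init : p₂ 0 = p0)
    (hp₁rec : ∀ t s, p₁ (t + 1) s = ∑ s', ∑ a', T s a' s' * π₁ a' s' * p₁ t s')
    (hp₂rec : ∀ t s, p₂ (t + 1) s = ∑ s', ∑ a', T s a' s' * π₂ a' s' * p₂ t s')
    (η₁ η₂ : ℝ)
    (hη₁ : η₁ = ∑' t : ℕ, γ ^ t * ∑ s, ∑ a, π₁ a s * p₁ t s * r s a)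
    (hη₂ : η₂ = ∑' t : ℕ, γ ^ t * ∑ s, ∑ a, π₂ a s * p₂ t s * r s a) :
    |η₁ - η₂| ≤ 2 * rmax * ∑' t : ℕ, γ ^ t * min 1 (((t : ℝ) + 1) * K * d) ∧
      2 * rmax * (∑' t : ℕ, γ ^ t * min 1 (((t : ℝ) + 1) * K * d)) ≤
        2 * rmax * K * d / (1 - γ) ^ 2 := by
  have hKd : 0 ≤ K * d := mul_nonneg hK hd
  have hassoc : ∀ t : ℕ, ((t : ℝ) + 1) * K * d = ((t : ℝ) + 1) * (K * d) :=
    fun t => mul_assoc _ _ _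
  simp only [hassoc]
  have hq₁ := occupancy_mem_stdSimplex hT0 hT1 hπ₁0 hπ₁1 (hp₁init ▸ ⟨hp00, hp01⟩) hp₁rec
  have hq₂ := occupancy_mem_stdSimplex hT0 hT1 hπ₂0 hπ₂1 (hp₂init ▸ ⟨hp00, hp01⟩) hp₂rec
  have hR₁ := fun t => abs_sum_policy_reward_le hπ₁0 hπ₁1 (hq₁ t) hr
  have hR₂ := fun t => abs_sum_policy_reward_le hπ₂0 hπ₂1 (hq₂ t) hr
  have hrmax : 0 ≤ rmax := (abs_nonneg _).trans (hR₁ 0)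
  have hstep : ∀ t : ℕ, |∑ s, ∑ a, π₁ a s * p₁ t s * r s a - ∑ s, ∑ a, π₂ a s * p₂ t s * r s a|
      ≤ 2 * rmax * min 1 ((t + 1) * (K * d)) := fun t =>
    calc _ ≤ (∑ x, |stateActionDist π₁ (p₁ t) x - stateActionDist π₂ (p₂ t) x|) * rmax :=
          abs_sum_policy_reward_sub_le π₁ π₂ (p₁ t) (p₂ t) hr
      _ ≤ 2 * min 1 ((t + 1) * (K * d)) * rmax := by
          gcongr
          exact sum_abs_sub_stateActionDist_occupancy_le hT0 hT1 hπ₁0 hπ₁1 hTV hq₂ hp₁rec hp₂rec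
            hπ₂0 hπ₂1 hq₁ (hp₁init.trans hp₂init.symm) t
      _ = 2 * rmax * min 1 ((t + 1) * (K * d)) := by ring
  refine ⟨hη₁ ▸ hη₂ ▸ abs_tsum_geometric_mul_sub_le hγ0 hγ1 hR₁ hR₂
    (fun t => abs_min_one_le_one (by positivity)) hstep, ?_⟩
  calc 2 * rmax * ∑' t : ℕ, γ ^ t * min 1 ((t + 1) * (K * d))
      ≤ 2 * rmax * (K * d / (1 - γ) ^ 2) := by
        gcongr
        exact tsum_geometric_mul_min_le hγ0 hγ1 hKd
    _ = 2 * rmax * K * d / (1 - γ) ^ 2 := by ring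
end

section
/- Let S, A be finite sets, T(·|a,s') a transition kernel, and π₁, π₂ policies with sup_{s'} D_TV(π₁(·|s'), π₂(·|s')) ≤ ε. Starting from a common initial distribution p_0 on S, define p_t(s) = ∑_{s',a} T(s|a,s') π₁(a|s') p_{t-1}(s') and q_t(s) = ∑_{s',a} T(s|a,s') π₂(a|s') q_{t-1}(s') with p_0 = q_0. Then for all t ≥ 0, D_TV(p_t, q_t) ≤ t·ε. -/
/-- State visitation distributions of two ε-close policies diverge by at most
t·ε in TV distance after t steps. -/
theorem state_visitation_tv_bound
    {S A : Type*} [Fintype S] [Fintype A]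
    (T : S → A → S → ℝ)
    (hT0 : ∀ s a s', 0 ≤ T s a s') (hT1 : ∀ a s', ∑ s, T s a s' = 1)
    (π₁ π₂ : A → S → ℝ)
    (hπ₁0 : ∀ a s, 0 ≤ π₁ a s) (hπ₁1 : ∀ s, ∑ a, π₁ a s = 1)
    (hπ₂0 : ∀ a s, 0 ≤ π₂ a s) (hπ₂1 : ∀ s, ∑ a, π₂ a s = 1)
    (ε : ℝ) (hε : 0 ≤ ε)
    (hTV : ∀ s', (∑ a, |π₁ a s' - π₂ a s'|) / 2 ≤ ε)
    (p0 : S → ℝ) (hp00 : ∀ s, 0 ≤ p0 s) (hp01 : ∑ s, p0 s = 1)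
    (p q : ℕ → S → ℝ)
    (hpinit : p 0 = p0) (hqinit : q 0 = p0)
    (hprec : ∀ t s, p (t + 1) s = ∑ s', ∑ a, T s a s' * π₁ a s' * p t s')
    (hqrec : ∀ t s, q (t + 1) s = ∑ s', ∑ a, T s a s' * π₂ a s' * q t s') :
    ∀ t : ℕ, (∑ s, |p t s - q t s|) / 2 ≤ (t : ℝ) * ε := by
  -- q t is a probability distribution
  have hq : ∀ t : ℕ, (∀ s, 0 ≤ q t s) ∧ (∑ s, q t s) = 1 := by
    intro t
    induction t with
    | zero => exact ⟨fun s => hqinit ▸ hp00 s, hqinit ▸ hp01⟩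
    | succ t ih =>
      obtain ⟨ih0, ih1⟩ := ih
      constructor
      · intro s
        rw [hqrec]
        apply Finset.sum_nonneg; intro s' _
        apply Finset.sum_nonneg; intro a _
        exact mul_nonneg (mul_nonneg (hT0 s a s') (hπ₂0 a s')) (ih0 s')
      · simp only [hqrec]
        rw [Finset.sum_comm]
        calc ∑ s', ∑ s, ∑ a, T s a s' * π₂ a s' * q t s'
            = ∑ s', ∑ a, ∑ s, T s a s' * π₂ a s' * q t s' := by
              exact Finset.sum_congr rfl fun s' _ => Finset.sum_comm
          _ = ∑ s', ∑ a, (∑ s, T s a s') * (π₂ a s' * q t s') := by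
              simp [Finset.sum_mul, mul_assoc]
          _ = ∑ s', (∑ a, π₂ a s') * q t s' := by
              simp [hT1, Finset.sum_mul]
          _ = 1 := by simp [hπ₂1, ih1]
  intro t
  induction t with
  | zero => simp [hpinit, hqinit]
  | succ t ih =>
    have key : ∑ s, |p (t+1) s - q (t+1) s| ≤ (∑ s, |p t s - q t s|) + 2 * ε := by
      have step1 : ∀ s, |p (t+1) s - q (t+1) s|
          ≤ ∑ s', ∑ a, T s a s' * |π₁ a s' * p t s' - π₂ a s' * q t s'| := by
        intro s
        rw [hprec, hqrec, ← Finset.sum_sub_distrib]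
        refine le_trans (Finset.abs_sum_le_sum_abs _ _) ?_
        apply Finset.sum_le_sum; intro s' _
        rw [← Finset.sum_sub_distrib]
        refine le_trans (Finset.abs_sum_le_sum_abs _ _) ?_
        apply Finset.sum_le_sum; intro a _
        rw [mul_assoc, mul_assoc, ← mul_sub, abs_mul, abs_of_nonneg (hT0 s a s')]
      calc ∑ s, |p (t+1) s - q (t+1) s|
          ≤ ∑ s, ∑ s', ∑ a, T s a s' * |π₁ a s' * p t s' - π₂ a s' * q t s'| :=
            Finset.sum_le_sum fun s _ => step1 s
        _ = ∑ s', ∑ a, (∑ s, T s a s') * |π₁ a s' * p t s' - π₂ a s' * q t s'| := by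
            rw [Finset.sum_comm]
            refine Finset.sum_congr rfl fun s' _ => ?_
            rw [Finset.sum_comm]
            simp [Finset.sum_mul]
        _ = ∑ s', ∑ a, |π₁ a s' * p t s' - π₂ a s' * q t s'| := by simp [hT1]
        _ ≤ ∑ s', ∑ a, (π₁ a s' * |p t s' - q t s'| + |π₁ a s' - π₂ a s'| * q t s') := by
            apply Finset.sum_le_sum; intro s' _
            apply Finset.sum_le_sum; intro a _
            have : π₁ a s' * p t s' - π₂ a s' * q t s'
                = π₁ a s' * (p t s' - q t s') + (π₁ a s' - π₂ a s') * q t s' := by ring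
            rw [this]
            refine le_trans (abs_add_le _ _) ?_
            rw [abs_mul, abs_mul, abs_of_nonneg (hπ₁0 a s'), abs_of_nonneg ((hq t).1 s')]
        _ = ∑ s', (|p t s' - q t s'| + (∑ a, |π₁ a s' - π₂ a s'|) * q t s') := by
            refine Finset.sum_congr rfl fun s' _ => ?_
            rw [Finset.sum_add_distrib, ← Finset.sum_mul, ← Finset.sum_mul, hπ₁1, one_mul]
        _ ≤ ∑ s', (|p t s' - q t s'| + (2 * ε) * q t s') := by
            apply Finset.sum_le_sum; intro s' _
            have h1 : (∑ a, |π₁ a s' - π₂ a s'|) ≤ 2 * ε := by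
              have := hTV s'; linarith
            gcongr
            exact (hq t).1 s'
        _ = (∑ s, |p t s - q t s|) + 2 * ε := by
            rw [Finset.sum_add_distrib, ← Finset.mul_sum, (hq t).2, mul_one]
    push_cast
    have : (∑ s, |p (t+1) s - q (t+1) s|) / 2 ≤ (∑ s, |p t s - q t s|) / 2 + ε := by
      linarith
    calc (∑ s, |p (t+1) s - q (t+1) s|) / 2 ≤ (∑ s, |p t s - q t s|) / 2 + ε := this
      _ ≤ t * ε + ε := by linarith
      _ = (t + 1) * ε := by ring
end
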